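/- arXiv:2509.13709 — 7 statements merged into one kernel-verified Lean document; each statement's English description precedes it below -/
import Mathlib

section
/- General Correspondence Principle (supersolution half): Let X ⊂ ℝⁿ be open and (F, 𝒢) a proper elliptic operator-constraint pair. Define 𝓕 := {(x,J) ∈ 𝒢 : F(x,J) ≥ 0} and assume that 𝓕 is a subequation and that the compatibility condition Int 𝓕 = {(x,J) ∈ 𝒢 : F(x,J) > 0} holds. Then for every u ∈ LSC(X): u is 𝓕-superharmonic on X if and only if u is a 𝒢-admissible supersolution of F(J²u) = 0 on X. -/
/-! By (T) the interior of the fiber `Fc_x` is the fiber of `Int Fc`, which compatibility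
identifies with `{J ∈ G_x : F(x, J) > 0}`; the complement of that set is exactly the
supersolution condition at `x`. -/

open Set Filter Topology Bornology
open scoped Pointwise

noncomputable section

/-- Euclidean space `ℝⁿ`. -/
abbrev En (n : ℕ) : Type := EuclideanSpace ℝ (Fin n)

/-- The space `S(n)` of real symmetric `n×n` matrices. -/
abbrev SymMat (n : ℕ) : Type := selfAdjoint (Matrix (Fin n) (Fin n) ℝ)

/-- The (constant coefficient) 2-jet space `J² = ℝ × ℝⁿ × S(n)`. -/
abbrev Jet (n : ℕ) : Type := ℝ × En n × SymMat n

/-- `P ≥ 0`, i.e. `P` is positive semidefinite. -/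
def PSD {n : ℕ} (P : SymMat n) : Prop := (P : Matrix (Fin n) (Fin n) ℝ).PosSemidef

/-- The Hessian matrix `D²φ(x)` of `φ` at `x`. -/
def hess {n : ℕ} (φ : En n → ℝ) (x : En n) : Matrix (Fin n) (Fin n) ℝ :=
  Matrix.of fun i j =>
    iteratedFDeriv ℝ 2 φ x ![EuclideanSpace.single i (1 : ℝ), EuclideanSpace.single j (1 : ℝ)]

/-- `J ∈ J^{2,+}_x u`: `J = (φ(x), Dφ(x), D²φ(x))` for some `C²` function `φ` defined near
`x` (inside `X`) with `u ≤ φ` near `x` and `u(x) = φ(x)`. -/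
def IsUpperTestJet {n : ℕ} (X : Set (En n)) (u : En n → EReal) (x : En n) (J : Jet n) : Prop :=
  ∃ φ : En n → ℝ, ∃ V : Set (En n), IsOpen V ∧ x ∈ V ∧ V ⊆ X ∧ ContDiffOn ℝ 2 φ V ∧
    (∀ y ∈ V, u y ≤ (φ y : EReal)) ∧ u x = (φ x : EReal) ∧
    J.1 = φ x ∧ J.2.1 = gradient φ x ∧ (J.2.2 : Matrix (Fin n) (Fin n) ℝ) = hess φ x

/-- `J ∈ J^{2,-}_x u`: `J = (φ(x), Dφ(x), D²φ(x))` for some `C²` function `φ` defined near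
`x` (inside `X`) with `u ≥ φ` near `x` and `u(x) = φ(x)`. -/
def IsLowerTestJet {n : ℕ} (X : Set (En n)) (u : En n → EReal) (x : En n) (J : Jet n) : Prop :=
  ∃ φ : En n → ℝ, ∃ V : Set (En n), IsOpen V ∧ x ∈ V ∧ V ⊆ X ∧ ContDiffOn ℝ 2 φ V ∧
    (∀ y ∈ V, (φ y : EReal) ≤ u y) ∧ u x = (φ x : EReal) ∧
    J.1 = φ x ∧ J.2.1 = gradient φ x ∧ (J.2.2 : Matrix (Fin n) (Fin n) ℝ) = hess φ x

/-- The fiber `F_x` of a constraint set `F ⊆ J²(X) = X × J²`. -/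
def fiber {n : ℕ} (F : Set (En n × Jet n)) (x : En n) : Set (Jet n) := {J | (x, J) ∈ F}

/-- `u ∈ USC(X)`: upper semicontinuous on `X` with values in `[-∞, ∞)`. -/
def USCOn {n : ℕ} (u : En n → EReal) (X : Set (En n)) : Prop :=
  UpperSemicontinuousOn u X ∧ ∀ x ∈ X, u x < ⊤

/-- `u ∈ LSC(X)`: lower semicontinuous on `X` with values in `(-∞, ∞]`. -/
def LSCOn {n : ℕ} (u : En n → EReal) (X : Set (En n)) : Prop :=
  LowerSemicontinuousOn u X ∧ ∀ x ∈ X, ⊥ < u x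

/-- A subequation (constraint set) `F ⊆ X × J²`, i.e. a set satisfying the positivity
property (P), the negativity property (N) and the topological stability conditions (T)
(closures and interiors of `F` being taken relative to `J²(X) = X × J²`). -/
structure IsSubequation {n : ℕ} (X : Set (En n)) (F : Set (En n × Jet n)) : Prop where
  subset : F ⊆ X ×ˢ (univ : Set (Jet n))
  pos : ∀ x ∈ X, ∀ J ∈ fiber F x, ∀ P : SymMat n, PSD P →
    (J.1, J.2.1, J.2.2 + P) ∈ fiber F x
  neg : ∀ x ∈ X, ∀ J ∈ fiber F x, ∀ s : ℝ, s ≤ 0 →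
    (J.1 + s, J.2.1, J.2.2) ∈ fiber F x
  top1 : F = closure (interior F) ∩ (X ×ˢ (univ : Set (Jet n)))
  top2 : ∀ x ∈ X, fiber (interior F) x = interior (fiber F x)
  top3 : ∀ x ∈ X, fiber F x = closure (interior (fiber F x))

/-- `u` is `F`-subharmonic on `X`: all upper test jets lie in the fibers of `F`. -/
def IsFSubharmonicOn {n : ℕ} (F : Set (En n × Jet n)) (u : En n → EReal)
    (X : Set (En n)) : Prop :=
  ∀ x ∈ X, ∀ J : Jet n, IsUpperTestJet X u x J → J ∈ fiber F x

/-- `w` is `F`-superharmonic on `X`: all lower test jets lie in `(Int (F_x))ᶜ`. -/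
def IsFSuperharmonicOn {n : ℕ} (F : Set (En n × Jet n)) (w : En n → EReal)
    (X : Set (En n)) : Prop :=
  ∀ x ∈ X, ∀ J : Jet n, IsLowerTestJet X w x J → J ∉ interior (fiber F x)

/-- A proper elliptic operator-constraint pair `(F, G)`: either `G = J²(X)` (unconstrained
case) or `G` is a subequation (constrained case); `F` is continuous on `G` and is
degenerate elliptic and proper on the fibers of `G`. -/
structure ProperEllipticPair {n : ℕ} (X : Set (En n)) (G : Set (En n × Jet n))
    (F : En n → Jet n → ℝ) : Prop where
  constraint : G = X ×ˢ (univ : Set (Jet n)) ∨ IsSubequation X G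
  cont : ContinuousOn (fun q : En n × Jet n => F q.1 q.2) G
  mono : ∀ x ∈ X, ∀ J ∈ fiber G x, ∀ s : ℝ, s ≤ 0 → ∀ P : SymMat n, PSD P →
    F x J ≤ F x (J.1 + s, J.2.1, J.2.2 + P)

/-- `u` is a `G`-admissible (viscosity) subsolution of `F(J²u) = 0` on `X`. -/
def AdmissibleSubsolution {n : ℕ} (X : Set (En n)) (G : Set (En n × Jet n))
    (F : En n → Jet n → ℝ) (u : En n → EReal) : Prop :=
  ∀ x ∈ X, ∀ J : Jet n, IsUpperTestJet X u x J → J ∈ fiber G x ∧ 0 ≤ F x J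

/-- `u` is a `G`-admissible (viscosity) supersolution of `F(J²u) = 0` on `X`. -/
def AdmissibleSupersolution {n : ℕ} (X : Set (En n)) (G : Set (En n × Jet n))
    (F : En n → Jet n → ℝ) (u : En n → EReal) : Prop :=
  ∀ x ∈ X, ∀ J : Jet n, IsLowerTestJet X u x J →
    J ∉ fiber G x ∨ (J ∈ fiber G x ∧ F x J ≤ 0)

theorem mem_fiber_interior_iff_of_interior_eq {n : ℕ} {G Fc : Set (En n × Jet n)}
    {F : En n → Jet n → ℝ} (hComp : interior Fc = {q ∈ G | 0 < F q.1 q.2})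
    (x : En n) (J : Jet n) :
    J ∈ fiber (interior Fc) x ↔ J ∈ fiber G x ∧ 0 < F x J := by
  rw [hComp]
  rfl

theorem notMem_fiber_interior_iff_of_interior_eq {n : ℕ} {G Fc : Set (En n × Jet n)}
    {F : En n → Jet n → ℝ} (hComp : interior Fc = {q ∈ G | 0 < F q.1 q.2})
    (x : En n) (J : Jet n) :
    J ∉ fiber (interior Fc) x ↔ J ∉ fiber G x ∨ (J ∈ fiber G x ∧ F x J ≤ 0) := by
  rw [mem_fiber_interior_iff_of_interior_eq hComp, not_and_or, not_lt]
  tauto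

theorem statement_1_general {n : ℕ} (X : Set (En n))
    (G : Set (En n × Jet n)) (F : En n → Jet n → ℝ)
    (Fc : Set (En n × Jet n))
    (hSub : IsSubequation X Fc)
    (hComp : interior Fc = {q ∈ G | 0 < F q.1 q.2})
    (u : En n → EReal) :
    IsFSuperharmonicOn Fc u X ↔ AdmissibleSupersolution X G F u := by
  refine forall₂_congr fun x hx => forall_congr' fun J => imp_congr_right fun _ => ?_
  rw [← hSub.top2 x hx]
  exact notMem_fiber_interior_iff_of_interior_eq hComp x J

/-- General Correspondence Principle (supersolution half). -/
theorem statement_1 {n : ℕ} (X : Set (En n)) (hX : IsOpen X)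
    (G : Set (En n × Jet n)) (F : En n → Jet n → ℝ)
    (hFG : ProperEllipticPair X G F)
    (Fc : Set (En n × Jet n)) (hFc : Fc = {q ∈ G | 0 ≤ F q.1 q.2})
    (hSub : IsSubequation X Fc)
    (hComp : interior Fc = {q ∈ G | 0 < F q.1 q.2})
    (u : En n → EReal) (hu : LSCOn u X) :
    IsFSuperharmonicOn Fc u X ↔ AdmissibleSupersolution X G F u :=
  statement_1_general X G F Fc hSub hComp u

end
end

section
/- Let X ⊂ ℝⁿ be open and let (F, 𝒢) be a proper elliptic operator-constraint pair which is M-monotone and fiberegular for a monotonicity cone subequation M ⊂ J². Then the set 𝓕 := {(x,J) ∈ 𝒢 : F(x,J) ≥ 0} satisfies the subequation axioms (P), (N) and (T); it is M-monotone, i.e. 𝓕_x + M ⊂ 𝓕_x for every x ∈ X; and it is fiberegular, i.e. the fiber map x ↦ 𝓕_x is continuous from X into the closed subsets of J² with the Hausdorff distance. -/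
open Set Filter Topology Bornology
open scoped Pointwise

noncomputable section

attribute [local instance] Matrix.normedAddCommGroup

/-- A constant coefficient subequation `F ⊆ J²`: closed, `F = closure (interior F)`, and
satisfying the positivity property (P) and negativity property (N). -/
def IsCCSubequation {n : ℕ} (F : Set (Jet n)) : Prop :=
  IsClosed F ∧ F = closure (interior F) ∧
  (∀ J ∈ F, ∀ P : SymMat n, PSD P → (J.1, J.2.1, J.2.2 + P) ∈ F) ∧
  (∀ J ∈ F, ∀ s : ℝ, s ≤ 0 → (J.1 + s, J.2.1, J.2.2) ∈ F)

/-- A monotonicity cone subequation: a constant coefficient subequation which is also a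
convex cone with vertex at the origin. -/
def IsMonotonicityConeSubequation {n : ℕ} (M : Set (Jet n)) : Prop :=
  IsCCSubequation M ∧ Convex ℝ M ∧ (0 : Jet n) ∈ M ∧
  (∀ t : ℝ, 0 ≤ t → ∀ J ∈ M, t • J ∈ M)

/-- The Dirichlet dual `(−interior S)ᶜ` of a constant coefficient set `S ⊆ J²`. -/
def dualJ {n : ℕ} (S : Set (Jet n)) : Set (Jet n) := (-(interior S))ᶜ

/-- `(F, G)` is an `M`-monotone pair: `G_x + M ⊆ G_x` and `F(x, J + J') ≥ F(x, J)`
for all `x ∈ X`, `J ∈ G_x`, `J' ∈ M`. -/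
def MMonotonePair {n : ℕ} (X : Set (En n)) (G : Set (En n × Jet n))
    (F : En n → Jet n → ℝ) (M : Set (Jet n)) : Prop :=
  ∀ x ∈ X, ∀ J ∈ fiber G x, ∀ J' ∈ M, J + J' ∈ fiber G x ∧ F x J ≤ F x (J + J')

/-- Continuity on `X` of the fiber map `x ↦ G_x`, into the (closed) subsets of `J²`
equipped with the Hausdorff distance. -/
def FiberContinuous {n : ℕ} (X : Set (En n)) (G : Set (En n × Jet n)) : Prop :=
  ∀ x ∈ X, Tendsto (fun y => EMetric.hausdorffEdist (fiber G y) (fiber G x)) (𝓝[X] x) (𝓝 0)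

/-- `(F, G)` is a fiberegular pair (with respect to the monotonicity cone `M`). -/
def FiberegularPair {n : ℕ} (X : Set (En n)) (G : Set (En n × Jet n))
    (F : En n → Jet n → ℝ) (M : Set (Jet n)) : Prop :=
  FiberContinuous X G ∧
  ∃ J₀ ∈ interior M, ∀ Ω : Set (En n), IsOpen Ω → IsBounded Ω → closure Ω ⊆ X →
    ∀ η : ℝ, 0 < η → ∃ δ : ℝ, 0 < δ ∧ ∀ x ∈ Ω, ∀ y ∈ Ω, dist x y < δ →
      ∀ J ∈ fiber G x, F x J ≤ F y (J + η • J₀)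

section AuxLemmas

instance symMatContinuousSMul (n : ℕ) : ContinuousSMul ℝ (SymMat n) := by
  constructor
  rw [IsInducing.subtypeVal.continuous_iff]
  exact continuous_fst.smul (continuous_subtype_val.comp continuous_snd)

end AuxLemmas

set_option maxHeartbeats 1000000

/-- The constraint set defined by the correspondence relation for a fiberegular
`M`-monotone proper elliptic pair is a fiberegular `M`-monotone subequation. -/


theorem statement_2 {n : ℕ} (X : Set (En n)) (hX : IsOpen X)
    (G : Set (En n × Jet n)) (F : En n → Jet n → ℝ) (M : Set (Jet n))
    (hFG : ProperEllipticPair X G F)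
    (hM : IsMonotonicityConeSubequation M)
    (hMono : MMonotonePair X G F M)
    (hFib : FiberegularPair X G F M)
    (Fc : Set (En n × Jet n)) (hFc : Fc = {q ∈ G | 0 ≤ F q.1 q.2}) :
    IsSubequation X Fc ∧
    (∀ x ∈ X, ∀ J ∈ fiber Fc x, ∀ J' ∈ M, J + J' ∈ fiber Fc x) ∧
    FiberContinuous X Fc := by
  classical
  obtain ⟨⟨hMcl, hMint, hMpos, hMneg⟩, hMconv, hM0, hMcone⟩ := hM
  obtain ⟨hGFC, J₀, hJ₀, hreg⟩ := hFib
  have hGsub : G ⊆ X ×ˢ (univ : Set (Jet n)) := by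
    rcases hFG.constraint with h | h
    · rw [h]
    · exact h.subset
  have hFcG : Fc ⊆ G := by rw [hFc]; exact fun q hq => hq.1
  have hFcX : Fc ⊆ X ×ˢ (univ : Set (Jet n)) := hFcG.trans hGsub
  have hmemFc : ∀ (x : En n) (J : Jet n), J ∈ fiber Fc x ↔ (J ∈ fiber G x ∧ 0 ≤ F x J) := by
    intro x J
    show (x, J) ∈ Fc ↔ _
    rw [hFc]; exact Iff.rfl
  -- M-monotonicity of Fc
  have hMonoFc : ∀ x ∈ X, ∀ J ∈ fiber Fc x, ∀ J' ∈ M, J + J' ∈ fiber Fc x := by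
    intro x hx J hJ J' hJ'
    obtain ⟨hJG, hJF⟩ := (hmemFc x J).mp hJ
    obtain ⟨h1, h2⟩ := hMono x hx J hJG J' hJ'
    exact (hmemFc x _).mpr ⟨h1, le_trans hJF h2⟩
  -- positive multiples of J₀ are in the interior of M
  have hsm : ∀ t : ℝ, 0 < t → t ≤ 1 → t • J₀ ∈ interior M := by
    intro t ht ht1
    have h := hMconv.combo_interior_closure_mem_interior hJ₀ (subset_closure hM0) ht
      (by linarith : (0:ℝ) ≤ 1 - t) (by ring)
    simpa using h
  -- translation lemma
  have hshift : ∀ y ∈ X, ∀ Jh ∈ fiber G y, ∀ (J W : Jet n) (ρ : ℝ),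
      Metric.ball W ρ ⊆ M → dist J Jh < ρ → J + W ∈ fiber G y := by
    intro y hy Jh hJh J W ρ hball hd
    have hm : (J - Jh) + W ∈ M := by
      apply hball
      have hde : dist ((J - Jh) + W) W = dist J Jh := by
        rw [dist_eq_norm, dist_eq_norm]; congr 1; abel
      rw [Metric.mem_ball, hde]; exact hd
    have h1 := (hMono y hy Jh hJh _ hm).1
    have he : Jh + ((J - Jh) + W) = J + W := by abel
    rwa [he] at h1
  -- nearby fiber points
  have hnear : ∀ (x y : En n) (J : Jet n) (ρ : ℝ), J ∈ fiber G x →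
      EMetric.hausdorffEdist (fiber G y) (fiber G x) < ENNReal.ofReal ρ →
      ∃ Jh ∈ fiber G y, dist J Jh < ρ := by
    intro x y J ρ hJ hH
    have h1 : EMetric.infEdist J (fiber G y) < ENNReal.ofReal ρ :=
      lt_of_le_of_lt (EMetric.infEdist_le_hausdorffEdist_of_mem hJ)
        (by rwa [EMetric.hausdorffEdist_comm])
    obtain ⟨Jh, hJh, hd⟩ := EMetric.infEdist_lt_iff.mp h1
    exact ⟨Jh, hJh, edist_lt_ofReal.mp hd⟩
  -- small balls with closure inside X
  have hballX : ∀ x ∈ X, ∃ r : ℝ, 0 < r ∧ closure (Metric.ball x r) ⊆ X := by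
    intro x hx
    obtain ⟨r, hr, hsub⟩ := Metric.mem_nhds_iff.mp (hX.mem_nhds hx)
    exact ⟨r/2, by linarith,
      (Metric.closure_ball_subset_closedBall.trans
        (Metric.closedBall_subset_ball (by linarith))).trans hsub⟩
  -- eventual smallness of the Hausdorff distance for G
  have hHev : ∀ x ∈ X, ∀ ρ : ℝ, 0 < ρ → ∀ᶠ y in 𝓝[X] x,
      EMetric.hausdorffEdist (fiber G y) (fiber G x) < ENNReal.ofReal ρ := by
    intro x hx ρ hρ
    exact (hGFC x hx).eventually
      (Filter.Tendsto.eventually_lt_const (ENNReal.ofReal_pos.mpr hρ) tendsto_id)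
  -- the key interior lemma
  have hKey : ∀ x ∈ X, ∀ J ∈ fiber Fc x, ∀ t : ℝ, 0 < t → t ≤ 1 →
      (x, J + t • J₀) ∈ interior Fc := by
    intro x hx J hJ t ht ht1
    obtain ⟨hJG, hJF⟩ := (hmemFc x J).mp hJ
    have hh : 0 < t / 2 := by positivity
    have hh1 : t / 2 ≤ 1 := by linarith
    obtain ⟨ρ, hρ, hball⟩ := Metric.mem_nhds_iff.mp
      (mem_interior_iff_mem_nhds.mp (hsm (t / 2) hh hh1))
    obtain ⟨r, hr, hrX⟩ := hballX x hx
    obtain ⟨δ, hδ, hδp⟩ := hreg (Metric.ball x r) Metric.isOpen_ball Metric.isBounded_ball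
      hrX (t / 2) hh
    have hev : ∀ᶠ y in 𝓝 x, y ∈ X ∧
        EMetric.hausdorffEdist (fiber G y) (fiber G x) < ENNReal.ofReal ρ := by
      have h1 := hHev x hx ρ hρ
      rw [nhdsWithin_eq_nhds.mpr (hX.mem_nhds hx)] at h1
      exact (hX.eventually_mem hx).and h1
    obtain ⟨σ, hσ, hσp⟩ := Metric.eventually_nhds_iff.mp hev
    refine mem_interior.mpr ⟨(Metric.ball x (min σ (min δ r))) ×ˢ
      Metric.ball (J + t • J₀) (ρ / 2), ?_, Metric.isOpen_ball.prod Metric.isOpen_ball, ?_, ?_⟩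
    · rintro ⟨y, K⟩ ⟨hy, hK⟩
      simp only [Metric.mem_ball] at hy hK
      have hyX : y ∈ X := (hσp (lt_of_lt_of_le hy (min_le_left _ _))).1
      have hyH := (hσp (lt_of_lt_of_le hy (min_le_left _ _))).2
      have hyδ : dist x y < δ := by
        rw [dist_comm]; exact lt_of_lt_of_le hy ((min_le_right _ _).trans (min_le_left _ _))
      have hyr : y ∈ Metric.ball x r := by
        rw [Metric.mem_ball]; exact lt_of_lt_of_le hy ((min_le_right _ _).trans (min_le_right _ _))
      obtain ⟨Jh, hJhG, hJhd⟩ := hnear x y J ρ hJG hyH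
      have hG1 : J + (t / 2) • J₀ ∈ fiber G y := hshift y hyX Jh hJhG J ((t / 2) • J₀) ρ hball hJhd
      have hF1 : 0 ≤ F y (J + (t / 2) • J₀) :=
        le_trans hJF (hδp x (Metric.mem_ball_self hr) y hyr hyδ J hJG)
      have hmm : K - (J + (t / 2) • J₀) ∈ M := by
        apply hball
        rw [Metric.mem_ball]
        have hde : dist (K - (J + (t / 2) • J₀)) ((t / 2) • J₀) = dist K (J + t • J₀) := by
          rw [dist_eq_norm, dist_eq_norm]
          congr 1
          have hts : t • J₀ = (t / 2) • J₀ + (t / 2) • J₀ := by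
            rw [← add_smul]; congr 1; ring
          rw [hts]; abel
        rw [hde]; linarith
      obtain ⟨hG2, hF2⟩ := hMono y hyX _ hG1 _ hmm
      have he : (J + (t / 2) • J₀) + (K - (J + (t / 2) • J₀)) = K := by abel
      rw [he] at hG2 hF2
      show (y, K) ∈ Fc
      rw [hFc]; exact ⟨hG2, le_trans hF1 hF2⟩
    · exact Metric.mem_ball_self (lt_min hσ (lt_min hδ hr))
    · exact Metric.mem_ball_self (by positivity)
  -- approach along the ray
  have happr : ∀ (J : Jet n) (ε : ℝ), 0 < ε →
      ∃ t : ℝ, 0 < t ∧ t ≤ 1 ∧ dist (J + t • J₀) J < ε := by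
    intro J ε hε
    have hc : Continuous (fun t : ℝ => J + t • J₀) :=
      continuous_const.add (continuous_id.smul continuous_const)
    have h0 : (fun t : ℝ => J + t • J₀) 0 = J := by simp
    have hev : ∀ᶠ t in 𝓝 (0:ℝ), (J + t • J₀) ∈ Metric.ball J ε := by
      have h1 : Tendsto (fun t : ℝ => J + t • J₀) (𝓝 0) (𝓝 J) := by
        simpa using hc.tendsto 0
      exact h1.eventually (eventually_of_mem (Metric.ball_mem_nhds J hε) (fun _ h => h))
    obtain ⟨t₀, ht₀, hp⟩ := Metric.eventually_nhds_iff.mp hev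
    have htpos : 0 < min (t₀ / 2) 1 := lt_min (by linarith) one_pos
    refine ⟨min (t₀ / 2) 1, htpos, min_le_right _ _, ?_⟩
    have hb := hp (y := min (t₀ / 2) 1) (by
      rw [Real.dist_eq, sub_zero, abs_of_pos htpos]
      exact lt_of_le_of_lt (min_le_left _ _) (by linarith))
    rwa [Metric.mem_ball] at hb
  -- fibers of interiors
  have hfibint : ∀ (S : Set (En n × Jet n)) (x : En n),
      fiber (interior S) x ⊆ interior (fiber S x) := by
    intro S x
    have hopen : IsOpen (fiber (interior S) x) := by
      show IsOpen ((fun J : Jet n => (x, J)) ⁻¹' interior S)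
      exact isOpen_interior.preimage (continuous_const.prodMk continuous_id)
    exact interior_maximal (fun J hJ => (interior_subset (s := S) hJ : (x, J) ∈ S)) hopen
  -- relative closedness of G and Fc
  have hGrel : closure G ∩ (X ×ˢ (univ : Set (Jet n))) ⊆ G := by
    rcases hFG.constraint with h | h
    · rw [h]; exact inter_subset_right
    · intro q hq
      have h1 : G ⊆ closure (interior G) := by
        intro a ha
        rw [h.top1] at ha
        exact ha.1
      have h2 : closure G ⊆ closure (interior G) := by
        simpa [closure_closure] using closure_mono h1
      rw [h.top1]; exact ⟨h2 hq.1, hq.2⟩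
  have hFcrel : closure Fc ∩ (X ×ˢ (univ : Set (Jet n))) ⊆ Fc := by
    rintro q ⟨hcl, hXq⟩
    have hqG : q ∈ G := hGrel ⟨closure_mono hFcG hcl, hXq⟩
    haveI hne : (𝓝[Fc] q).NeBot := mem_closure_iff_nhdsWithin_neBot.mp hcl
    have htd : Tendsto (fun p : En n × Jet n => F p.1 p.2) (𝓝[Fc] q) (𝓝 (F q.1 q.2)) :=
      (hFG.cont q hqG).mono_left (nhdsWithin_mono q hFcG)
    have hevF : ∀ᶠ p in 𝓝[Fc] q, 0 ≤ F p.1 p.2 := by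
      filter_upwards [eventually_mem_nhdsWithin] with p hp
      rw [hFc] at hp; exact hp.2
    have hq0 : 0 ≤ F q.1 q.2 := ge_of_tendsto htd hevF
    rw [hFc]; exact ⟨hqG, hq0⟩
  have hfc : ∀ x ∈ X, IsClosed (fiber Fc x) := by
    intro x hx
    apply isClosed_of_closure_subset
    intro J hJ
    have h1 : (x, J) ∈ closure Fc := by
      have hsub : closure (fiber Fc x) ⊆ (fun J : Jet n => (x, J)) ⁻¹' (closure Fc) :=
        closure_minimal (fun K hK => subset_closure hK)
          (isClosed_closure.preimage (continuous_const.prodMk continuous_id))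
      exact hsub hJ
    exact hFcrel ⟨h1, hx, mem_univ J⟩
  refine ⟨?_, hMonoFc, ?_⟩
  · refine ⟨hFcX, ?_, ?_, ?_, ?_, ?_⟩
    · -- positivity (P)
      rintro x hx ⟨r, p, A⟩ hJ P hP
      have hm : ((0:ℝ), (0:En n), P) ∈ M := by
        have h := hMpos 0 hM0 P hP
        simpa using h
      have h1 := hMonoFc x hx _ hJ _ hm
      have he : ((r, p, A) : Jet n) + ((0:ℝ), (0:En n), P) = (r, p, A + P) := by
        simp [Prod.ext_iff]
      rw [he] at h1
      exact h1
    · -- negativity (N)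
      rintro x hx ⟨r, p, A⟩ hJ s hs
      have hm : ((s:ℝ), (0:En n), (0:SymMat n)) ∈ M := by
        have h := hMneg 0 hM0 s hs
        simpa using h
      have h1 := hMonoFc x hx _ hJ _ hm
      have he : ((r, p, A) : Jet n) + ((s:ℝ), (0:En n), (0:SymMat n)) = (r + s, p, A) := by
        simp [Prod.ext_iff]
      rw [he] at h1
      exact h1
    · -- top1
      ext q
      obtain ⟨x, J⟩ := q
      constructor
      · intro hq
        have hx : x ∈ X := (hFcX hq).1
        refine ⟨?_, hFcX hq⟩
        refine Metric.mem_closure_iff.mpr ?_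
        intro ε hε
        obtain ⟨t, ht, ht1, htd⟩ := happr J ε hε
        refine ⟨(x, J + t • J₀), hKey x hx J hq t ht ht1, ?_⟩
        rw [Prod.dist_eq]
        simp only [dist_self]
        rw [dist_comm] at htd
        exact max_lt hε htd
      · rintro ⟨hcl, hXm⟩
        exact hFcrel ⟨closure_mono interior_subset hcl, hXm⟩
    · -- top2
      intro x hx
      apply Subset.antisymm (hfibint Fc x)
      intro J hJ
      have hc : Continuous (fun t : ℝ => J - t • J₀) :=
        continuous_const.sub (continuous_id.smul continuous_const)
      have h0 : (fun t : ℝ => J - t • J₀) 0 = J := by simp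
      have hev : ∀ᶠ t in 𝓝 (0:ℝ), J - t • J₀ ∈ interior (fiber Fc x) := by
        have h1 : Tendsto (fun t : ℝ => J - t • J₀) (𝓝 0) (𝓝 J) := by
          simpa using hc.tendsto 0
        exact h1.eventually (eventually_of_mem (isOpen_interior.mem_nhds hJ) (fun _ h => h))
      obtain ⟨t₀, ht₀, hp⟩ := Metric.eventually_nhds_iff.mp hev
      have htpos : 0 < min (t₀ / 2) 1 := lt_min (by linarith) one_pos
      have hmem : J - (min (t₀ / 2) 1) • J₀ ∈ fiber Fc x :=
        interior_subset (hp (y := min (t₀ / 2) 1) (by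
          rw [Real.dist_eq, sub_zero, abs_of_pos htpos]
          exact lt_of_le_of_lt (min_le_left _ _) (by linarith)))
      have h1 := hKey x hx _ hmem (min (t₀ / 2) 1) htpos (min_le_right _ _)
      have he : (J - (min (t₀ / 2) 1) • J₀) + (min (t₀ / 2) 1) • J₀ = J := by abel
      rw [he] at h1
      exact h1
    · -- top3
      intro x hx
      apply Subset.antisymm
      · intro J hJ
        refine Metric.mem_closure_iff.mpr ?_
        intro ε hε
        obtain ⟨t, ht, ht1, htd⟩ := happr J ε hε
        exact ⟨J + t • J₀, hfibint Fc x (hKey x hx J hJ t ht ht1), by rwa [dist_comm] at htd⟩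
      · intro J hJ
        have h1 := closure_mono interior_subset hJ
        rwa [(hfc x hx).closure_eq] at h1
  · -- fiber continuity of Fc
    intro x hx
    rw [ENNReal.tendsto_nhds_zero]
    intro ε hε
    have hmt : min ε 1 ≠ ⊤ := ne_top_of_le_ne_top (by simp) (min_le_right _ _)
    have hm0 : min ε 1 ≠ 0 := (lt_min hε zero_lt_one).ne'
    set ε₀ := (min ε 1).toReal with hε₀def
    have hε₀ : 0 < ε₀ := ENNReal.toReal_pos hm0 hmt
    have hε₀le : ENNReal.ofReal ε₀ ≤ ε := by
      rw [hε₀def, ENNReal.ofReal_toReal hmt]; exact min_le_left _ _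
    obtain ⟨t, ht, ht1, htd⟩ := happr 0 ε₀ hε₀
    have htn : ‖t • J₀‖ < ε₀ := by
      have h1 : dist ((0:Jet n) + t • J₀) (0:Jet n) = ‖t • J₀‖ := by
        rw [dist_eq_norm]; congr 1; abel
      rwa [h1] at htd
    have htJ : ∀ J : Jet n, edist J (J + t • J₀) ≤ ENNReal.ofReal ε₀ := by
      intro J
      rw [edist_le_ofReal hε₀.le]
      have h1 : dist J (J + t • J₀) = ‖t • J₀‖ := by
        rw [dist_eq_norm, show J - (J + t • J₀) = -(t • J₀) by abel, norm_neg]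
      rw [h1]; exact htn.le
    obtain ⟨ρ, hρ, hball⟩ := Metric.mem_nhds_iff.mp
      (mem_interior_iff_mem_nhds.mp (hsm t ht ht1))
    obtain ⟨r, hr, hrX⟩ := hballX x hx
    obtain ⟨δ, hδ, hδp⟩ := hreg (Metric.ball x r) Metric.isOpen_ball Metric.isBounded_ball
      hrX t ht
    have hevd : ∀ᶠ y in 𝓝[X] x, dist y x < min δ r :=
      eventually_nhdsWithin_of_eventually_nhds
        (Metric.eventually_nhds_iff.mpr ⟨min δ r, lt_min hδ hr, fun _ hy => hy⟩)
    filter_upwards [eventually_mem_nhdsWithin, hHev x hx ρ hρ, hevd] with y hyX hyH hyd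
    have hyΩ : y ∈ Metric.ball x r := Metric.mem_ball.mpr (lt_of_lt_of_le hyd (min_le_right _ _))
    have hxy : dist y x < δ := lt_of_lt_of_le hyd (min_le_left _ _)
    refine le_trans (EMetric.hausdorffEdist_le_of_mem_edist ?_ ?_) hε₀le
    · intro J hJ
      obtain ⟨hJG, hJF⟩ := (hmemFc y J).mp hJ
      obtain ⟨Jh, hJhG, hJhd⟩ := hnear y x J ρ hJG (by exact EMetric.hausdorffEdist_comm.trans_lt hyH)
      have hGx : J + t • J₀ ∈ fiber G x := hshift x hx Jh hJhG J (t • J₀) ρ hball hJhd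
      have hF : 0 ≤ F x (J + t • J₀) :=
        le_trans hJF (hδp y hyΩ x (Metric.mem_ball_self hr) hxy J hJG)
      exact ⟨J + t • J₀, (hmemFc x _).mpr ⟨hGx, hF⟩, htJ J⟩
    · intro J hJ
      obtain ⟨hJG, hJF⟩ := (hmemFc x J).mp hJ
      obtain ⟨Jh, hJhG, hJhd⟩ := hnear x y J ρ hJG hyH
      have hGy : J + t • J₀ ∈ fiber G y := hshift y hyX Jh hJhG J (t • J₀) ρ hball hJhd
      have hF : 0 ≤ F y (J + t • J₀) :=
        le_trans hJF (hδp x (Metric.mem_ball_self hr) y hyΩ (by rwa [dist_comm] at hxy) J hJG)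
      exact ⟨J + t • J₀, (hmemFc y _).mpr ⟨hGy, hF⟩, htJ J⟩


end
end

section
/- Let F ⊂ S(n) be a nonempty closed set satisfying the positivity property: A ∈ F and P ≥ 0 imply A + P ∈ F. Then the interior of F is nonempty and F = closure(interior F). -/
open Set Filter Topology Bornology
open scoped Pointwise
open scoped Matrix

noncomputable section

/-- `t • 1` as a self-adjoint matrix. -/
def sOne (n : ℕ) (t : ℝ) : SymMat n :=
  ⟨t • (1 : Matrix (Fin n) (Fin n) ℝ), by
    rw [selfAdjoint.mem_iff]
    simp⟩

lemma sOne_coe (n : ℕ) (t : ℝ) :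
    ((sOne n t : SymMat n) : Matrix (Fin n) (Fin n) ℝ) = t • 1 := rfl

/-- A small symmetric perturbation of `t • 1` is positive semidefinite. -/
lemma smul_one_add_posSemidef {n : ℕ} {t : ℝ} (ht : 0 ≤ t)
    {H : Matrix (Fin n) (Fin n) ℝ} (hH : H.IsHermitian)
    (hb : ∀ i j, |H i j| ≤ t / n) :
    (t • (1 : Matrix (Fin n) (Fin n) ℝ) + H).PosSemidef := by
  rw [Matrix.posSemidef_iff_dotProduct_mulVec]
  constructor
  · show (t • (1 : Matrix (Fin n) (Fin n) ℝ) + H)ᴴ = _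
    rw [Matrix.conjTranspose_add, Matrix.conjTranspose_smul, Matrix.conjTranspose_one,
      hH.eq, star_trivial]
  · intro x
    have hx2 : (0:ℝ) ≤ ∑ i, x i ^ 2 := Finset.sum_nonneg fun i _ => sq_nonneg _
    have key : |∑ i, x i * ∑ j, H i j * x j| ≤ t * ∑ i, x i ^ 2 := by
      have S2 : (∑ i, |x i|) ^ 2 ≤ (n : ℝ) * ∑ i, x i ^ 2 := by
        have := sq_sum_le_card_mul_sum_sq (s := (Finset.univ : Finset (Fin n)))
          (f := fun i => |x i|)
        simpa [sq_abs] using this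
      calc |∑ i, x i * ∑ j, H i j * x j|
          ≤ ∑ i, |x i * ∑ j, H i j * x j| := Finset.abs_sum_le_sum_abs _ _
        _ ≤ ∑ i, |x i| * ((t / n) * ∑ j, |x j|) := by
            refine Finset.sum_le_sum fun i _ => ?_
            rw [abs_mul]
            refine mul_le_mul_of_nonneg_left ?_ (abs_nonneg _)
            calc |∑ j, H i j * x j| ≤ ∑ j, |H i j * x j| := Finset.abs_sum_le_sum_abs _ _
              _ ≤ ∑ j, (t / n) * |x j| := by
                  refine Finset.sum_le_sum fun j _ => ?_
                  rw [abs_mul]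
                  exact mul_le_mul_of_nonneg_right (hb i j) (abs_nonneg _)
              _ = (t / n) * ∑ j, |x j| := by rw [Finset.mul_sum]
        _ = (t / n) * (∑ i, |x i|) ^ 2 := by
            rw [← Finset.sum_mul]; ring
        _ ≤ (t / n) * ((n : ℝ) * ∑ i, x i ^ 2) := by
            refine mul_le_mul_of_nonneg_left S2 ?_
            positivity
        _ = (t * ((n : ℝ) / n)) * ∑ i, x i ^ 2 := by ring
        _ ≤ t * ∑ i, x i ^ 2 := by
            refine mul_le_mul_of_nonneg_right ?_ hx2
            have h1 : (n : ℝ) / n ≤ 1 := div_self_le_one _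
            nlinarith
    have hmv : (t • (1 : Matrix (Fin n) (Fin n) ℝ) + H).mulVec x
        = t • x + H.mulVec x := by
      rw [Matrix.add_mulVec, Matrix.smul_mulVec, Matrix.one_mulVec]
    have expand : dotProduct (star x)
        ((t • (1 : Matrix (Fin n) (Fin n) ℝ) + H).mulVec x)
        = t * ∑ i, x i ^ 2 + ∑ i, x i * ∑ j, H i j * x j := by
      have h1 : dotProduct (star x)
          ((t • (1 : Matrix (Fin n) (Fin n) ℝ) + H).mulVec x)
          = ∑ i, x i * (t * x i + ∑ j, H i j * x j) := by
        rw [hmv]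
        simp [dotProduct, Matrix.mulVec, star_trivial]
      rw [h1, Finset.mul_sum, ← Finset.sum_add_distrib]
      exact Finset.sum_congr rfl fun i _ => by ring
    rw [expand]
    have hneg := neg_le_of_abs_le key
    linarith

/-- Shifting an element of `F` by `t • 1` lands in the interior of `F`. -/
lemma mem_interior_shift {n : ℕ} {F : Set (SymMat n)}
    (hpos : ∀ A ∈ F, ∀ P : SymMat n, PSD P → A + P ∈ F)
    {A : SymMat n} (hA : A ∈ F) {t : ℝ} (ht : 0 < t) :
    A + sOne n t ∈ interior F := by
  set C : SymMat n := A + sOne n t with hC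
  set W : Set (Matrix (Fin n) (Fin n) ℝ) :=
    {M | ∀ i j, |M i j - (C : Matrix (Fin n) (Fin n) ℝ) i j| < t / n} with hW
  rw [mem_interior]
  refine ⟨Subtype.val ⁻¹' W, ?_, ?_, ?_⟩
  · -- subset of F
    intro B hB
    set P : SymMat n := B - A with hP
    have hPcoe : (P : Matrix (Fin n) (Fin n) ℝ)
        = t • (1 : Matrix (Fin n) (Fin n) ℝ)
          + ((B : Matrix (Fin n) (Fin n) ℝ) - (C : Matrix (Fin n) (Fin n) ℝ)) := by
      simp only [hP, hC, AddSubgroup.coe_sub, AddSubgroup.coe_add, sOne_coe]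
      abel
    have hPSD : PSD P := by
      rw [PSD, hPcoe]
      refine smul_one_add_posSemidef ht.le ?_ ?_
      · show ((B : Matrix (Fin n) (Fin n) ℝ) - (C : Matrix (Fin n) (Fin n) ℝ))ᴴ = _
        have hB' := B.2
        have hC' := C.2
        rw [selfAdjoint.mem_iff] at hB' hC'
        rw [Matrix.conjTranspose_sub]
        show star (B : Matrix (Fin n) (Fin n) ℝ) - star (C : Matrix (Fin n) (Fin n) ℝ) = _
        rw [hB', hC']
      · intro i j
        have := (hB i j).le
        simpa using this
    have hmem : A + P ∈ F := hpos A hA P hPSD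
    have hBA : A + P = B := by rw [hP]; abel
    rwa [hBA] at hmem
  · -- openness
    refine IsOpen.preimage continuous_subtype_val ?_
    have hWeq : W = ⋂ i, ⋂ j, {M : Matrix (Fin n) (Fin n) ℝ |
        |M i j - (C : Matrix (Fin n) (Fin n) ℝ) i j| < t / n} := by
      ext M; simp [hW, Set.mem_iInter]
    rw [hWeq]
    refine isOpen_iInter_of_finite fun i => isOpen_iInter_of_finite fun j => ?_
    have hcont : Continuous fun M : Matrix (Fin n) (Fin n) ℝ =>
        |M i j - (C : Matrix (Fin n) (Fin n) ℝ) i j| :=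
      ((Continuous.matrix_elem continuous_id i j).sub continuous_const).abs
    exact isOpen_lt hcont continuous_const
  · -- membership
    intro i j
    have hn : (0:ℝ) < n := by exact_mod_cast i.pos
    simpa using div_pos ht hn

/-- A nonempty closed `F ⊆ S(n)` satisfying positivity has nonempty interior and
satisfies `F = closure (interior F)`. -/
theorem statement_6 {n : ℕ} (F : Set (SymMat n)) (hne : F.Nonempty) (hcl : IsClosed F)
    (hpos : ∀ A ∈ F, ∀ P : SymMat n, PSD P → A + P ∈ F) :
    (interior F).Nonempty ∧ F = closure (interior F) := by
  obtain ⟨A₀, hA₀⟩ := hne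
  refine ⟨⟨A₀ + sOne n 1, mem_interior_shift hpos hA₀ one_pos⟩, ?_⟩
  refine Subset.antisymm ?_ ?_
  · intro A hA
    have hcont : Continuous fun t : ℝ => A + sOne n t := by
      rw [continuous_induced_rng]
      have heq : (Subtype.val ∘ fun t : ℝ => A + sOne n t)
          = fun t : ℝ => (A : Matrix (Fin n) (Fin n) ℝ) + t • 1 := rfl
      rw [heq]
      exact continuous_const.add (continuous_id.smul continuous_const)
    have h0 : A + sOne n 0 = A := by
      ext : 1
      simp [sOne_coe]
    have htend : Tendsto (fun t : ℝ => A + sOne n t) (𝓝[>] (0:ℝ)) (𝓝 A) := by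
      have h1 : Tendsto (fun t : ℝ => A + sOne n t) (𝓝 (0:ℝ)) (𝓝 (A + sOne n 0)) :=
        hcont.tendsto 0
      rw [h0] at h1
      exact h1.mono_left nhdsWithin_le_nhds
    refine mem_closure_of_tendsto htend ?_
    filter_upwards [self_mem_nhdsWithin] with t ht
    exact mem_interior_shift hpos hA ht
  · calc closure (interior F) ⊆ closure F := closure_mono interior_subset
      _ = F := hcl.closure_eq

end
end

section
/- A pure second order constant coefficient constraint set is a subequation if and only if its dual is: Let F ⊂ S(n) be closed, nonempty, with F ≠ S(n), and satisfying positivity F + 𝒫 ⊂ F, where 𝒫 = {P ∈ S(n) : P ≥ 0}. Then the Dirichlet dual \widetilde{F} := (−interior F)ᶜ is closed, nonempty, satisfies \widetilde{F} ≠ S(n) and \widetilde{F} + 𝒫 ⊂ \widetilde{F}, and moreover \widetilde{\widetilde{F}} = F. -/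
open Set Filter Topology Bornology
open scoped Pointwise
open Matrix

noncomputable section

/-- The Dirichlet dual of a constant coefficient pure second order constraint set. -/
def dualS {n : ℕ} (F : Set (SymMat n)) : Set (SymMat n) := (-(interior F))ᶜ

lemma symMat_isHermitian {n : ℕ} (A : SymMat n) :
    (A : Matrix (Fin n) (Fin n) ℝ).IsHermitian :=
  A.prop

/-- If all entries of a symmetric matrix `A` are at most `ε/(n+1)` in absolute value,
then `ε • 1 + A` is positive semidefinite. -/
lemma psd_shift {n : ℕ} (ε : ℝ) (hε : 0 < ε) (A : SymMat n)
    (hA : ∀ i j, |(A : Matrix (Fin n) (Fin n) ℝ) i j| ≤ ε / (n + 1)) :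
    PSD (ε • (1 : SymMat n) + A) := by
  set δ : ℝ := ε / (n + 1) with hδdef
  have hδ0 : 0 ≤ δ := by positivity
  refine Matrix.posSemidef_iff_dotProduct_mulVec.mpr ⟨symMat_isHermitian _, ?_⟩
  intro x
  have hcoe : ((ε • (1 : SymMat n) + A : SymMat n) : Matrix (Fin n) (Fin n) ℝ)
      = ε • (1 : Matrix (Fin n) (Fin n) ℝ) + (A : Matrix (Fin n) (Fin n) ℝ) := by
    simp
  rw [hcoe]
  have hstar : star x = x := by
    funext i; simp
  rw [hstar, Matrix.add_mulVec, Matrix.smul_mulVec, Matrix.one_mulVec,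
    dotProduct_add, dotProduct_smul]
  set S : ℝ := x ⬝ᵥ x with hSdef
  have hS0 : 0 ≤ S := by
    rw [hSdef, dotProduct]
    exact Finset.sum_nonneg fun i _ => mul_self_nonneg _
  have hbound : |x ⬝ᵥ (A : Matrix (Fin n) (Fin n) ℝ).mulVec x| ≤ δ * (∑ i, |x i|) ^ 2 := by
    have h1 : |x ⬝ᵥ (A : Matrix (Fin n) (Fin n) ℝ).mulVec x|
        ≤ ∑ i, |x i| * ∑ j, δ * |x j| := by
      rw [dotProduct]
      refine (Finset.abs_sum_le_sum_abs _ _).trans ?_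
      refine Finset.sum_le_sum fun i _ => ?_
      rw [abs_mul, Matrix.mulVec, dotProduct]
      refine mul_le_mul_of_nonneg_left ?_ (abs_nonneg _)
      refine (Finset.abs_sum_le_sum_abs _ _).trans ?_
      refine Finset.sum_le_sum fun j _ => ?_
      rw [abs_mul]
      exact mul_le_mul_of_nonneg_right (hA i j) (abs_nonneg _)
    calc |x ⬝ᵥ (A : Matrix (Fin n) (Fin n) ℝ).mulVec x|
        ≤ ∑ i, |x i| * ∑ j, δ * |x j| := h1
      _ = δ * (∑ i, |x i|) ^ 2 := by
          rw [← Finset.mul_sum, ← Finset.sum_mul, sq]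
          ring
  have hCS : (∑ i, |x i|) ^ 2 ≤ (n : ℝ) * S := by
    have := sq_sum_le_card_mul_sum_sq (s := (Finset.univ : Finset (Fin n)))
      (f := fun i => |x i|)
    simp only [Finset.card_univ, Fintype.card_fin] at this
    refine this.trans_eq ?_
    congr 1
    rw [hSdef, dotProduct]
    refine Finset.sum_congr rfl fun i _ => ?_
    rw [sq_abs, sq]
  have hfinal : |x ⬝ᵥ (A : Matrix (Fin n) (Fin n) ℝ).mulVec x| ≤ ε * S := by
    refine (hbound.trans (mul_le_mul_of_nonneg_left hCS hδ0)).trans ?_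
    rw [hδdef, div_mul_eq_mul_div, div_le_iff₀ (by positivity)]
    nlinarith [mul_nonneg hε.le hS0]
  have := neg_abs_le (x ⬝ᵥ (A : Matrix (Fin n) (Fin n) ℝ).mulVec x)
  have h2 : -(ε * S) ≤ x ⬝ᵥ (A : Matrix (Fin n) (Fin n) ℝ).mulVec x := by
    linarith [neg_le_neg hfinal]
  have : ε • S = ε * S := rfl
  rw [this]
  linarith

/-- Entrywise-small symmetric matrices form a neighborhood of `0`. -/
lemma nbhd_small {n : ℕ} (δ : ℝ) (hδ : 0 < δ) :
    {A : SymMat n | ∀ i j, |(A : Matrix (Fin n) (Fin n) ℝ) i j| < δ} ∈ 𝓝 (0 : SymMat n) := by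
  have hV : IsOpen {M : Matrix (Fin n) (Fin n) ℝ | ∀ i j, |M i j| < δ} := by
    have he : {M : Matrix (Fin n) (Fin n) ℝ | ∀ i j, |M i j| < δ}
        = ⋂ i, ⋂ j, {M : Matrix (Fin n) (Fin n) ℝ | |M i j| < δ} := by
      ext M; simp
    rw [he]
    refine isOpen_iInter_of_finite fun i => isOpen_iInter_of_finite fun j => ?_
    have hc : Continuous fun M : Matrix (Fin n) (Fin n) ℝ => M i j :=
      (continuous_apply j).comp (continuous_apply i)
    exact isOpen_lt hc.abs continuous_const
  have hpre : IsOpen {A : SymMat n | ∀ i j, |(A : Matrix (Fin n) (Fin n) ℝ) i j| < δ} :=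
    hV.preimage continuous_subtype_val
  refine hpre.mem_nhds ?_
  intro i j
  simp [hδ]

/-- Adding a small positive multiple of the identity to a point of `F`
lands in the interior of `F`. -/
lemma add_smul_one_mem_interior {n : ℕ} {F : Set (SymMat n)}
    (hpos : F + {P : SymMat n | PSD P} ⊆ F) {x : SymMat n} (hx : x ∈ F)
    {ε : ℝ} (hε : 0 < ε) : x + ε • (1 : SymMat n) ∈ interior F := by
  rw [mem_interior_iff_mem_nhds]
  have hU := nbhd_small (n := n) (ε / (n + 1)) (by positivity)
  rw [← map_add_left_nhds_zero (x + ε • (1 : SymMat n)), mem_map]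
  filter_upwards [hU] with A hA
  have he : x + ε • (1 : SymMat n) + A = x + (ε • (1 : SymMat n) + A) := by abel
  show x + ε • (1 : SymMat n) + A ∈ F
  rw [he]
  exact hpos (Set.add_mem_add hx (psd_shift ε hε A fun i j => (hA i j).le))

/-- Positivity of the interior. -/
lemma interior_add_psd {n : ℕ} {F : Set (SymMat n)}
    (hpos : F + {P : SymMat n | PSD P} ⊆ F)
    {x Q : SymMat n} (hx : x ∈ interior F) (hQ : PSD Q) : x + Q ∈ interior F := by
  have hsub : (fun y => y + Q) '' interior F ⊆ F := by
    rintro _ ⟨y, hy, rfl⟩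
    exact hpos (Set.add_mem_add (interior_subset hy) hQ)
  have hop : IsOpen ((fun y => y + Q) '' interior F) :=
    isOpenMap_add_right Q _ isOpen_interior
  exact interior_maximal hsub hop ⟨x, hx, rfl⟩

/-- `F` is the closure of its interior. -/
lemma closure_interior_eq {n : ℕ} {F : Set (SymMat n)} (hcl : IsClosed F)
    (hpos : F + {P : SymMat n | PSD P} ⊆ F) : closure (interior F) = F := by
  refine subset_antisymm (closure_minimal interior_subset hcl) ?_
  intro x hx
  rw [mem_closure_iff_nhds]
  intro V hV
  have hcont : Tendsto (fun ε : ℝ => x + ε • (1 : SymMat n)) (𝓝 0) (𝓝 x) := by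
    rw [tendsto_subtype_rng]
    have hc : Continuous fun ε : ℝ =>
        (x : Matrix (Fin n) (Fin n) ℝ) + ε • (1 : Matrix (Fin n) (Fin n) ℝ) :=
      continuous_const.add (continuous_id.smul continuous_const)
    have := hc.tendsto 0
    simpa using this
  have h1 : Tendsto (fun ε : ℝ => x + ε • (1 : SymMat n)) (𝓝[>] 0) (𝓝 x) :=
    hcont.mono_left nhdsWithin_le_nhds
  have h2 : ∀ᶠ ε : ℝ in 𝓝[>] 0, x + ε • (1 : SymMat n) ∈ V := h1.eventually_mem hV
  have h3 : ∀ᶠ ε : ℝ in 𝓝[>] 0, (0 : ℝ) < ε :=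
    eventually_mem_of_tendsto_nhdsWithin tendsto_id
  obtain ⟨ε, hεV, hε0⟩ := (h2.and h3).exists
  exact ⟨x + ε • (1 : SymMat n), hεV, add_smul_one_mem_interior hpos hx hε0⟩

lemma closure_neg_set {n : ℕ} (s : Set (SymMat n)) : closure (-s) = -closure s := by
  have h := (Homeomorph.neg (SymMat n)).preimage_closure s
  have e1 : ⇑(Homeomorph.neg (SymMat n)) ⁻¹' s = -s := rfl
  have e2 : ⇑(Homeomorph.neg (SymMat n)) ⁻¹' closure s = -closure s := rfl
  rw [e1, e2] at h
  exact h.symm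

/-- A pure second order constant coefficient constraint set is a subequation iff its
Dirichlet dual is, and duality is an involution. -/
theorem statement_9 {n : ℕ} (F : Set (SymMat n)) (hcl : IsClosed F) (hne : F.Nonempty)
    (hproper : F ≠ (univ : Set (SymMat n)))
    (hpos : F + {P : SymMat n | PSD P} ⊆ F) :
    IsClosed (dualS F) ∧ (dualS F).Nonempty ∧ dualS F ≠ (univ : Set (SymMat n)) ∧
    dualS F + {P : SymMat n | PSD P} ⊆ dualS F ∧ dualS (dualS F) = F := by
  obtain ⟨x0, hx0⟩ := hne
  have hx0' : x0 + (1 : ℝ) • (1 : SymMat n) ∈ interior F :=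
    add_smul_one_mem_interior hpos hx0 one_pos
  obtain ⟨B, hB⟩ : ∃ B, B ∉ F := by
    by_contra h
    push_neg at h
    exact hproper (eq_univ_of_forall h)
  refine ⟨?_, ?_, ?_, ?_, ?_⟩
  · exact isOpen_interior.neg.isClosed_compl
  · refine ⟨-B, fun h => ?_⟩
    rw [Set.mem_neg, neg_neg] at h
    exact hB (interior_subset h)
  · intro h
    have hmem : -(x0 + (1 : ℝ) • (1 : SymMat n)) ∈ dualS F := h ▸ mem_univ _
    apply hmem
    rw [Set.mem_neg, neg_neg]
    exact hx0'
  · rintro C hC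
    rw [Set.mem_add] at hC
    obtain ⟨A, hA, Q, hQ, rfl⟩ := hC
    intro hmem
    rw [Set.mem_neg] at hmem
    apply hA
    rw [Set.mem_neg]
    have := interior_add_psd hpos hmem hQ
    have he : -(A + Q) + Q = -A := by abel
    rwa [he] at this
  · have h1 : interior (dualS F) = (-F)ᶜ := by
      rw [dualS, interior_compl, closure_neg_set, closure_interior_eq hcl hpos]
    rw [dualS, h1]
    ext A
    simp [Set.mem_neg]

end
end

section
/- Jet addition duality equivalence: Let F ⊂ J² = ℝ × ℝⁿ × S(n) be a constant coefficient subequation and M ⊂ J² a monotonicity cone subequation. Then F + M ⊂ F if and only if F + \widetilde{F} ⊂ \widetilde{M}, where \widetilde{S} := (−interior S)ᶜ denotes the Dirichlet dual (complement in J²). -/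
open Set Filter Topology Bornology
open scoped Pointwise

noncomputable section

/-- Jet addition duality equivalence: `F + M ⊆ F ↔ F + F̃ ⊆ M̃`. -/
theorem statement_10 {n : ℕ} (F M : Set (Jet n))
    (hF : IsCCSubequation F) (hM : IsMonotonicityConeSubequation M) :
    F + M ⊆ F ↔ F + dualJ F ⊆ dualJ M := by
  constructor
  · intro h z hz
    obtain ⟨x, hx, y, hy, rfl⟩ := hz
    intro hc
    rw [Set.mem_neg] at hc
    apply hy
    rw [Set.mem_neg]
    have hopen : IsOpen ({x} + interior M) := isOpen_interior.add_left
    have hsub : {x} + interior M ⊆ F := fun w hw => by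
      obtain ⟨a, ha, b, hb, rfl⟩ := hw
      rw [Set.mem_singleton_iff] at ha
      subst ha
      exact h ⟨a, hx, b, interior_subset hb, rfl⟩
    have : -y ∈ {x} + interior M := by
      refine ⟨x, rfl, -(x + y), hc, by show x + -(x + y) = -y; abel⟩
    exact interior_maximal hsub hopen this
  · intro h
    have key : F + interior M ⊆ F := by
      intro z hz
      obtain ⟨x, hx, m, hm, rfl⟩ := hz
      by_contra hxm
      have hy : -(x + m) ∈ dualJ F := by
        intro hc
        rw [Set.mem_neg, neg_neg] at hc
        exact hxm (interior_subset hc)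
      have : x + -(x + m) ∈ dualJ M := h ⟨x, hx, -(x + m), hy, rfl⟩
      apply this
      rw [Set.mem_neg]
      have e : -(x + -(x + m)) = m := by abel
      rw [e]; exact hm
    intro z hz
    obtain ⟨x, hx, m, hm, rfl⟩ := hz
    have hMint : m ∈ closure (interior M) := hM.1.2.1 ▸ hm
    have hcont : Continuous (fun a : Jet n => x + a) := continuous_const.add continuous_id
    have h1 : x + m ∈ closure ((fun a : Jet n => x + a) '' interior M) := by
      apply image_closure_subset_closure_image hcont
      exact ⟨m, hMint, rfl⟩
    have h2 : (fun a : Jet n => x + a) '' interior M ⊆ F := by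
      rintro w ⟨a, ha, rfl⟩
      exact key ⟨x, hx, a, ha, rfl⟩
    exact hF.1.closure_subset_iff.mpr h2 h1

end
end

section
/- Reduction of the comparison principle to the zero maximum principle: Let X ⊂ ℝⁿ be open, Ω a bounded open set with closure contained in X, 𝓕 ⊂ J²(X) a subequation, and M ⊂ J² a monotonicity cone subequation. Assume (i) the subharmonic addition formula holds on Ω: if u ∈ USC(Ω) is 𝓕-subharmonic on Ω and v ∈ USC(Ω) is \widetilde{𝓕}-subharmonic on Ω then u + v is \widetilde{M}-subharmonic on Ω; and (ii) the zero maximum principle holds for \widetilde{M} on the closure of Ω: every z ∈ USC(closure Ω) which is \widetilde{M}-subharmonic on Ω and satisfies z ≤ 0 on ∂Ω satisfies z ≤ 0 on Ω. Then the comparison principle holds: if u ∈ USC(closure Ω) is 𝓕-subharmonic on Ω, w ∈ LSC(closure Ω) is 𝓕-superharmonic on Ω, and u ≤ w on ∂Ω, then u ≤ w on Ω. -/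
open Set Filter Topology Bornology
open scoped Pointwise

noncomputable section

/-- The Dirichlet dual `(−Int F)ᶜ` of a constraint set `F ⊆ X × J²`, with the complement
taken in `J²(X) = X × J²` and the negation acting fiberwise on the jet variables. -/
def dualSubeq {n : ℕ} (X : Set (En n)) (F : Set (En n × Jet n)) : Set (En n × Jet n) :=
  (X ×ˢ (univ : Set (Jet n))) \ {q | (q.1, -q.2) ∈ interior F}

/-- `u` is `S`-subharmonic on `X` for a constant coefficient set `S ⊆ J²`. -/
def CCSubharmonicOn {n : ℕ} (S : Set (Jet n)) (u : En n → EReal) (X : Set (En n)) : Prop :=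
  ∀ x ∈ X, ∀ J : Jet n, IsUpperTestJet X u x J → J ∈ S

/-!
Upper test jets of `-w` are the negatives of lower test jets of `w`, so an `F`-superharmonic `w`
makes `-w` subharmonic for the Dirichlet dual of `F`. Subharmonic addition then makes the USC
function `u - w` subharmonic for the dual of `M`; it is `≤ 0` on `∂Ω`, hence on `Ω` by the
zero maximum principle, i.e. `u ≤ w` on `Ω`.
-/

section Semicontinuity

variable {n : ℕ} {X Y : Set (En n)} {u v w : En n → EReal}

theorem USCOn.mono (hu : USCOn u X) (hYX : Y ⊆ X) : USCOn u Y :=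
  ⟨hu.1.mono hYX, fun x hx => hu.2 x (hYX hx)⟩

theorem LSCOn.neg (hw : LSCOn w X) : USCOn (-w) X :=
  ⟨continuous_neg.comp_lowerSemicontinuousOn_antitone hw.1 EReal.neg_strictAnti.antitone,
    fun x hx => EReal.neg_lt_neg_iff.2 (hw.2 x hx)⟩

theorem USCOn.add (hu : USCOn u X) (hv : USCOn v X) : USCOn (u + v) X :=
  ⟨hu.1.add' hv.1 fun x hx =>
      EReal.continuousAt_add (Or.inl (hu.2 x hx).ne) (Or.inr (hv.2 x hx).ne),
    fun x hx => EReal.add_lt_top (hu.2 x hx).ne (hv.2 x hx).ne⟩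

end Semicontinuity

section TestJets

variable {n : ℕ}

theorem gradient_fun_neg (φ : En n → ℝ) (x : En n) :
    gradient (fun y => -φ y) x = -gradient φ x := by
  simp [gradient]

theorem hess_fun_neg (φ : En n → ℝ) (x : En n) : hess (fun y => -φ y) x = -hess φ x := by
  ext i j
  change iteratedFDeriv ℝ 2 (-φ) x _ = -iteratedFDeriv ℝ 2 φ x _
  rw [iteratedFDeriv_neg_apply]
  rfl

theorem IsUpperTestJet.neg_isLowerTestJet {X : Set (En n)} {w : En n → EReal} {x : En n}
    {J : Jet n} (hJ : IsUpperTestJet X (-w) x J) : IsLowerTestJet X w x (-J) := by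
  obtain ⟨φ, V, hVo, hxV, hVX, hφ, hle, heq, hJ₁, hJ₂, hJ₃⟩ := hJ
  refine ⟨fun y => -φ y, V, hVo, hxV, hVX, hφ.neg, fun y hy => ?_, ?_, ?_, ?_, ?_⟩
  · exact EReal.coe_neg (φ y) ▸ EReal.neg_le.1 (hle y hy)
  · rw [EReal.coe_neg, ← heq, Pi.neg_apply, neg_neg]
  · simp [hJ₁]
  · simp [hJ₂, gradient_fun_neg]
  · rw [hess_fun_neg, ← hJ₃]
    rfl

theorem mem_interior_fiber_of_mem_interior {F : Set (En n × Jet n)} {x : En n} {J : Jet n}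
    (h : (x, J) ∈ interior F) : J ∈ interior (fiber F x) :=
  preimage_interior_subset_interior_preimage (Continuous.prodMk_right x) h

theorem IsFSuperharmonicOn.neg_isFSubharmonicOn_dualSubeq {X Ω : Set (En n)}
    {F : Set (En n × Jet n)} {w : En n → EReal} (hw : IsFSuperharmonicOn F w Ω) (hΩX : Ω ⊆ X) :
    IsFSubharmonicOn (dualSubeq X F) (-w) Ω := fun x hx J hJ =>
  ⟨⟨hΩX hx, mem_univ J⟩, fun hJF =>
    hw x hx (-J) hJ.neg_isLowerTestJet (mem_interior_fiber_of_mem_interior hJF)⟩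

end TestJets

theorem statement_16_general {n : ℕ} (X : Set (En n))
    (Ω : Set (En n)) (hΩX : closure Ω ⊆ X)
    (F : Set (En n × Jet n))
    (M : Set (Jet n))
    (hAdd : ∀ u v : En n → EReal, USCOn u Ω → USCOn v Ω →
      IsFSubharmonicOn F u Ω → IsFSubharmonicOn (dualSubeq X F) v Ω →
      CCSubharmonicOn (dualJ M) (fun x => u x + v x) Ω)
    (hZMP : ∀ z : En n → EReal, USCOn z (closure Ω) →
      CCSubharmonicOn (dualJ M) z Ω → (∀ x ∈ frontier Ω, z x ≤ 0) → ∀ x ∈ Ω, z x ≤ 0)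
    (u w : En n → EReal) (hu : USCOn u (closure Ω)) (hw : LSCOn w (closure Ω))
    (husub : IsFSubharmonicOn F u Ω) (hwsup : IsFSuperharmonicOn F w Ω)
    (hbd : ∀ x ∈ frontier Ω, u x ≤ w x) :
    ∀ x ∈ Ω, u x ≤ w x := by
  have hv : IsFSubharmonicOn (dualSubeq X F) (-w) Ω :=
    hwsup.neg_isFSubharmonicOn_dualSubeq (subset_closure.trans hΩX)
  have hz : CCSubharmonicOn (dualJ M) (u + -w) Ω :=
    hAdd u (-w) (hu.mono subset_closure) (hw.neg.mono subset_closure) husub hv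
  have hz_nonpos := hZMP (u + -w) (hu.add hw.neg) hz fun x hx =>
    EReal.sub_nonpos.2 (hbd x hx)
  -- `EReal.sub_nonpos` needs no finiteness of `u`, `w`: e.g. `⊤ - ⊤ = ⊥`.
  exact fun x hx => EReal.sub_nonpos.1 (hz_nonpos x hx)

/-- Reduction of the comparison principle to the zero maximum principle via subharmonic
addition. -/
theorem statement_16 {n : ℕ} (X : Set (En n)) (hX : IsOpen X)
    (Ω : Set (En n)) (hΩ : IsOpen Ω) (hΩb : IsBounded Ω) (hΩX : closure Ω ⊆ X)
    (F : Set (En n × Jet n)) (hF : IsSubequation X F)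
    (M : Set (Jet n)) (hM : IsMonotonicityConeSubequation M)
    (hAdd : ∀ u v : En n → EReal, USCOn u Ω → USCOn v Ω →
      IsFSubharmonicOn F u Ω → IsFSubharmonicOn (dualSubeq X F) v Ω →
      CCSubharmonicOn (dualJ M) (fun x => u x + v x) Ω)
    (hZMP : ∀ z : En n → EReal, USCOn z (closure Ω) →
      CCSubharmonicOn (dualJ M) z Ω → (∀ x ∈ frontier Ω, z x ≤ 0) → ∀ x ∈ Ω, z x ≤ 0)
    (u w : En n → EReal) (hu : USCOn u (closure Ω)) (hw : LSCOn w (closure Ω))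
    (husub : IsFSubharmonicOn F u Ω) (hwsup : IsFSuperharmonicOn F w Ω)
    (hbd : ∀ x ∈ frontier Ω, u x ≤ w x) :
    ∀ x ∈ Ω, u x ≤ w x :=
  statement_16_general X Ω hΩX F M hAdd hZMP u w hu hw husub hwsup hbd
end
end

section
/- Zero maximum principle from a strict subharmonic: Let M ⊂ J² be a monotonicity cone subequation and Ω ⊂ ℝⁿ a bounded open set. Suppose there exists ψ, continuous on the closure of Ω and C² on Ω, which is strictly M-subharmonic in Ω, that is (ψ(x), Dψ(x), D²ψ(x)) ∈ Int M for all x ∈ Ω. Then the zero maximum principle holds for dual cone subharmonics: every z ∈ USC(closure Ω) which is \widetilde{M}-subharmonic on Ω and satisfies z ≤ 0 on ∂Ω satisfies z ≤ 0 on Ω. -/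
open Set Filter Topology Bornology
open scoped Pointwise

noncomputable section

instance SymMat.instContinuousSMulReal (n : ℕ) : ContinuousSMul ℝ (SymMat n) := by
  constructor
  apply continuous_induced_rng.mpr
  exact continuous_fst.smul (continuous_subtype_val.comp continuous_snd)

lemma ereal_exists_real {a : EReal} (h1 : a ≠ ⊥) (h2 : a ≠ ⊤) : ∃ r : ℝ, a = (r : EReal) := by
  induction a using EReal.rec with
  | bot => simp at h1
  | coe r => exact ⟨r, rfl⟩
  | top => simp at h2

lemma usc_exists_max {n : ℕ} {s : Set (En n)} (hs : IsCompact s) (hne : s.Nonempty)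
    {f : En n → EReal} (hf : UpperSemicontinuousOn f s) :
    ∃ a ∈ s, ∀ y ∈ s, f y ≤ f a := by
  obtain ⟨u, -, hu, hmem⟩ := exists_seq_tendsto_sSup (hne.image f) (OrderTop.bddAbove _)
  choose xk hxk hfxk using hmem
  obtain ⟨a, ha, φ, hφ, hconv⟩ := hs.isSeqCompact hxk
  refine ⟨a, ha, fun y hy => ?_⟩
  have h1 : f y ≤ sSup (f '' s) := le_sSup ⟨y, hy, rfl⟩
  refine h1.trans ?_
  by_contra h
  push_neg at h
  obtain ⟨c, hc1, hc2⟩ := exists_between h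
  have htd : Tendsto (fun k => xk (φ k)) atTop (𝓝[s] a) :=
    tendsto_nhdsWithin_of_tendsto_nhds_of_eventually_within _ hconv
      (Eventually.of_forall fun k => hxk (φ k))
  have hev : ∀ᶠ k in atTop, f (xk (φ k)) < c := htd.eventually (hf a ha c hc1)
  have hlim : Tendsto (fun k => f (xk (φ k))) atTop (𝓝 (sSup (f '' s))) := by
    simpa [Function.comp_def, hfxk] using hu.comp hφ.tendsto_atTop
  exact absurd (le_of_tendsto hlim (hev.mono fun k hk => hk.le)) (not_le.2 hc2)

lemma smul_mem_interior_of_convex {n : ℕ} {M : Set (Jet n)} (hconv : Convex ℝ M)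
    (h0 : (0 : Jet n) ∈ M) {J : Jet n} (hJ : J ∈ interior M) {t : ℝ} (ht : 0 < t) (ht1 : t ≤ 1) :
    t • J ∈ interior M := by
  have := hconv.combo_interior_closure_mem_interior hJ (subset_closure h0) ht
    (by linarith : (0:ℝ) ≤ 1 - t) (by ring)
  simpa using this

lemma translate_mem_interior {n : ℕ} {M : Set (Jet n)}
    (hN : ∀ J ∈ M, ∀ s : ℝ, s ≤ 0 → (J.1 + s, J.2.1, J.2.2) ∈ M)
    {J : Jet n} (hJ : J ∈ interior M) {s : ℝ} (hs : s ≤ 0) :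
    (J.1 + s, J.2.1, J.2.2) ∈ interior M := by
  obtain ⟨U, hUM, hUo, hJU⟩ := mem_interior.1 hJ
  refine mem_interior.2 ⟨(fun K : Jet n => ((s, 0, 0) : Jet n) + K) '' U, ?_, ?_, ?_⟩
  · rintro _ ⟨K, hK, rfl⟩
    have := hN K (hUM hK) s hs
    convert this using 2 <;> simp [Prod.ext_iff, add_comm]
  · exact (isOpenMap_add_left _) U hUo
  · exact ⟨J, hJU, by simp [Prod.ext_iff, add_comm]⟩

lemma affine_iteratedFDeriv {n : ℕ} {Ω : Set (En n)} (hΩ : IsOpen Ω) {ψ : En n → ℝ}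
    (hψ2 : ContDiffOn ℝ 2 ψ Ω) {x : En n} (hx : x ∈ Ω) (c a : ℝ) :
    iteratedFDeriv ℝ 2 (fun y => c + a • ψ y) x = a • iteratedFDeriv ℝ 2 ψ x := by
  have hu : UniqueDiffOn ℝ Ω := hΩ.uniqueDiffOn
  have hψ2' : ContDiffOn ℝ ((2:ℕ):ℕ∞) ψ Ω := by exact_mod_cast hψ2
  rw [← iteratedFDerivWithin_of_isOpen (𝕜 := ℝ) (f := fun y => c + a • ψ y) 2 hΩ hx,
    ← iteratedFDerivWithin_of_isOpen (𝕜 := ℝ) (f := ψ) 2 hΩ hx]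
  rw [iteratedFDerivWithin_add_apply' (contDiffOn_const.contDiffWithinAt hx) ((hψ2'.const_smul a).contDiffWithinAt hx) hu hx]
  rw [iteratedFDerivWithin_const_of_ne two_ne_zero c Ω]
  rw [show (fun y => a • ψ y) = a • ψ from rfl,
    iteratedFDerivWithin_const_smul_apply (hψ2'.contDiffWithinAt hx) hu hx]
  simp

lemma affine_gradient {n : ℕ} {Ω : Set (En n)} (hΩ : IsOpen Ω) {ψ : En n → ℝ}
    (hψ2 : ContDiffOn ℝ 2 ψ Ω) {x : En n} (hx : x ∈ Ω) (c a : ℝ) :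
    gradient (fun y => c + a • ψ y) x = a • gradient ψ x := by
  have hd : DifferentiableAt ℝ ψ x :=
    (hψ2.contDiffAt (hΩ.mem_nhds hx)).differentiableAt (by norm_num)
  have h1 : HasFDerivAt (fun y => c + a • ψ y) (a • fderiv ℝ ψ x) x := by
    exact (hd.hasFDerivAt.const_smul a).const_add c
  show (InnerProductSpace.toDual ℝ (En n)).symm _ = a • (InnerProductSpace.toDual ℝ (En n)).symm _
  rw [h1.fderiv, map_smul]


/-- Zero maximum principle for dual cone subharmonics from the existence of a strict
`M`-subharmonic. -/
theorem statement_18 {n : ℕ} (M : Set (Jet n)) (hM : IsMonotonicityConeSubequation M)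
    (Ω : Set (En n)) (hΩ : IsOpen Ω) (hΩb : IsBounded Ω)
    (ψ : En n → ℝ) (hψc : ContinuousOn ψ (closure Ω)) (hψ2 : ContDiffOn ℝ 2 ψ Ω)
    (hstrict : ∀ x ∈ Ω, ∃ A : SymMat n, (A : Matrix (Fin n) (Fin n) ℝ) = hess ψ x ∧
      (ψ x, gradient ψ x, A) ∈ interior M) :
    ∀ z : En n → EReal, USCOn z (closure Ω) → CCSubharmonicOn (dualJ M) z Ω →
      (∀ x ∈ frontier Ω, z x ≤ 0) → ∀ x ∈ Ω, z x ≤ 0 := by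
  obtain ⟨⟨-, -, -, hN⟩, hconv, h0, -⟩ := hM
  intro z hzUSC hsub hbd
  by_contra hcon
  push_neg at hcon
  obtain ⟨x, hx, hxpos⟩ := hcon
  obtain ⟨zusc, zfin⟩ := hzUSC
  have hxcl : x ∈ closure Ω := subset_closure hx
  obtain ⟨r, hr⟩ := ereal_exists_real (fun h => by simp [h] at hxpos) (zfin x hxcl).ne
  have hrpos : (0:ℝ) < r := by
    rw [hr] at hxpos; exact_mod_cast hxpos
  have hK : IsCompact (closure Ω) := hΩb.isCompact_closure
  obtain ⟨C, hC⟩ := hK.exists_bound_of_continuousOn hψc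
  set C0 : ℝ := max C 0 with hC0def
  have hC0 : 0 ≤ C0 := le_max_right _ _
  have hC' : ∀ y ∈ closure Ω, |ψ y| ≤ C0 := fun y hy => (hC y hy).trans (le_max_left _ _)
  set ε : ℝ := min (r / (2 * (C0 + 1))) 1 with hεdef
  have hε : 0 < ε := lt_min (by positivity) one_pos
  have hε1 : ε ≤ 1 := min_le_right _ _
  have hεb : ε * C0 < r / 2 := by
    have h1 : ε ≤ r / (2 * (C0 + 1)) := min_le_left _ _
    have h2 : ε * (C0 + 1) ≤ r / 2 := by
      calc ε * (C0 + 1) ≤ r / (2 * (C0 + 1)) * (C0 + 1) := by nlinarith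
        _ = r / 2 := by field_simp
    nlinarith
  have hψb : ∀ y ∈ closure Ω, |ε * ψ y| ≤ ε * C0 := by
    intro y hy
    rw [abs_mul, abs_of_pos hε]
    exact mul_le_mul_of_nonneg_left (hC' y hy) hε.le
  set w : En n → EReal := fun y => z y + ((ε * ψ y : ℝ) : EReal) with hwdef
  have husc : UpperSemicontinuousOn w (closure Ω) := by
    refine zusc.add' ?_ ?_
    · exact (continuous_coe_real_ereal.comp_continuousOn
        (continuousOn_const.mul hψc)).upperSemicontinuousOn
    · intro y hy
      exact EReal.continuousAt_add (Or.inl (zfin y hy).ne) (Or.inr (EReal.coe_ne_top _))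
  obtain ⟨a, hacl, hamax⟩ := usc_exists_max hK ⟨x, hxcl⟩ husc
  have hwx : ((r/2 : ℝ) : EReal) < w x := by
    have : w x = ((r + ε * ψ x : ℝ) : EReal) := by
      rw [hwdef]; simp only [hr, ← EReal.coe_add]
    rw [this]
    have := hψb x hxcl
    exact_mod_cast (by nlinarith [abs_le.1 (hψb x hxcl)] : r/2 < r + ε * ψ x)
  have hwxa : ((r/2 : ℝ) : EReal) < w a := hwx.trans_le (hamax x hxcl)
  have hafr : a ∉ frontier Ω := by
    intro hf
    have hz : z a ≤ 0 := hbd a hf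
    have h1 : w a ≤ ((ε * ψ a : ℝ) : EReal) := by
      calc w a ≤ 0 + ((ε * ψ a : ℝ) : EReal) := add_le_add_left hz _
        _ = ((ε * ψ a : ℝ) : EReal) := zero_add _
    have h2 : ((ε * ψ a : ℝ) : EReal) < ((r/2 : ℝ) : EReal) := by
      exact_mod_cast lt_of_le_of_lt (abs_le.1 (hψb a hacl)).2 hεb
    exact absurd (h1.trans_lt h2) (not_lt.2 hwxa.le)
  have ha : a ∈ Ω := by
    by_contra hna
    exact hafr (by rw [hΩ.frontier_eq]; exact ⟨hacl, hna⟩)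
  have hzanb : z a ≠ ⊥ := by
    intro hb
    have : w a = ⊥ := by rw [hwdef]; simp [hb]
    rw [this] at hwxa
    exact absurd hwxa (by simp)
  obtain ⟨z₀, hz₀⟩ := ereal_exists_real hzanb (zfin a hacl).ne
  set m : ℝ := z₀ + ε * ψ a with hmdef
  have hwa : w a = (m : EReal) := by rw [hwdef]; simp only [hz₀, ← EReal.coe_add]; rfl
  have hm : r/2 < m := by rw [hwa] at hwxa; exact_mod_cast hwxa
  have hmpos : 0 < m := lt_of_lt_of_le (by linarith) hm.le
  set φ : En n → ℝ := fun y => m + (-ε) • ψ y with hφdef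
  have hφa : φ a = z₀ := by simp only [hφdef, hmdef, smul_eq_mul]; ring
  obtain ⟨A, hA, hAint⟩ := hstrict a ha
  set J : Jet n := (φ a, gradient φ a, (-ε) • A) with hJdef
  have hJmem : J ∈ dualJ M := by
    refine hsub a ha J ⟨φ, Ω, hΩ, ha, Subset.rfl, ?_, ?_, ?_, rfl, rfl, ?_⟩
    · exact contDiffOn_const.add (hψ2.const_smul (-ε))
    · intro y hy
      have hmax := hamax y (subset_closure hy)
      rw [hwa] at hmax
      simp only [hwdef] at hmax
      rcases eq_or_ne (z y) ⊥ with hb | hb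
      · rw [hb]; exact bot_le
      · obtain ⟨t, ht⟩ := ereal_exists_real hb (zfin y (subset_closure hy)).ne
        rw [ht] at hmax ⊢
        rw [← EReal.coe_add] at hmax
        have h1 : t + ε * ψ y ≤ m := by exact_mod_cast hmax
        have h2 : t ≤ φ y := by rw [hφdef]; simp only [smul_eq_mul]; linarith
        exact_mod_cast h2
    · rw [hz₀, hφa]
    · have h1 : iteratedFDeriv ℝ 2 φ a = (-ε) • iteratedFDeriv ℝ 2 ψ a :=
        affine_iteratedFDeriv hΩ hψ2 ha m (-ε)
      have h2 : hess φ a = (-ε) • hess ψ a := by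
        ext i j
        simp [hess, h1]
      rw [h2, ← hA]
      exact selfAdjoint.val_smul (-ε) A
  apply hJmem
  rw [Set.mem_neg]
  have step1 : ε • ((ψ a, gradient ψ a, A) : Jet n) ∈ interior M :=
    smul_mem_interior_of_convex hconv h0 hAint hε hε1
  have step2 : ((ε • ((ψ a, gradient ψ a, A) : Jet n)).1 + (-m),
      (ε • ((ψ a, gradient ψ a, A) : Jet n)).2.1,
      (ε • ((ψ a, gradient ψ a, A) : Jet n)).2.2) ∈ interior M :=
    translate_mem_interior hN step1 (by linarith)
  have hgr : gradient φ a = (-ε) • gradient ψ a := affine_gradient hΩ hψ2 ha m (-ε)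
  have hJeq : -J = ((ε • ((ψ a, gradient ψ a, A) : Jet n)).1 + (-m),
      (ε • ((ψ a, gradient ψ a, A) : Jet n)).2.1,
      (ε • ((ψ a, gradient ψ a, A) : Jet n)).2.2) := by
    rw [hJdef]
    refine Prod.ext ?_ (Prod.ext ?_ ?_)
    · show -(φ a) = ε • ψ a + (-m)
      rw [hφa]
      simp only [smul_eq_mul, hmdef]
      ring
    · show -(gradient φ a) = ε • gradient ψ a
      rw [hgr, neg_smul, neg_neg]
    · show -((-ε) • A) = ε • A
      rw [neg_smul, neg_neg]
  rw [hJeq]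
  exact step2

end
end
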